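/- Let (a_n)_{n∈ℤ\{0}} be positive reals with a_n = C·n⁻² + O(|n|^{−5/2}) for a constant C > 0, and let (c_n)_{n∈ℤ\{0}} be reals satisfying: (i) 0 < c_n ≤ Q uniformly; (ii) |c_{n+1} − c_n| ≤ Q·|n|^{−3/2} for |n| > 1; (iii) |c_n − c_{−n}| ≤ Q·|n|^{−1/2} for n > 1. Then the partial sums S_N = Σ_{n=−N, n≠0}^{N} n·c_n·a_n are bounded uniformly in N. -/
import Mathlib

lemma abel_key_aux (a c : ℤ → ℝ) (C K Q : ℝ) (hC : 0 < C) (hQ : 0 < Q)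
    (ha : ∀ n : ℤ, n ≠ 0 → |a n - C * ((n : ℝ) ^ 2)⁻¹| ≤ K * |(n : ℝ)| ^ (-(5/2) : ℝ))
    (hc_bdd : ∀ n : ℤ, n ≠ 0 → 0 < c n ∧ c n ≤ Q)
    (hc_sym : ∀ n : ℤ, 1 < n → |c n - c (-n)| ≤ Q * (n : ℝ) ^ (-(1/2) : ℝ))
    (m : ℤ) (hm : 2 ≤ m) :
    |(m:ℝ) * c m * a m + ((-m : ℤ) : ℝ) * c (-m) * a (-m)|
      ≤ (2*Q*K + Q*C) * (m:ℝ) ^ (-(3/2):ℝ) := by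
  have hm0 : m ≠ 0 := by omega
  have hm0' : -m ≠ 0 := by omega
  set x : ℝ := (m:ℝ) with hx
  have hxpos : (0:ℝ) < x := by rw [hx]; exact_mod_cast (by omega : (0:ℤ) < m)
  have habs : |x| = x := abs_of_pos hxpos
  have ha1 := ha m hm0
  have ha2 := ha (-m) hm0'
  rw [show ((-m:ℤ):ℝ) = -x by push_cast [hx]; ring] at ha2 ⊢
  rw [neg_sq, abs_neg, habs] at ha2
  rw [habs] at ha1
  have hc1 := hc_bdd m hm0
  have hc2 := hc_bdd (-m) hm0'
  have hsym := hc_sym m (by omega)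
  have e1 : x * x ^ (-(5/2):ℝ) = x ^ (-(3/2):ℝ) := by
    rw [← Real.rpow_one_add' hxpos.le (by norm_num)]
    norm_num
  have e2 : x * ((x^2)⁻¹ * x ^ (-(1/2):ℝ)) = x ^ (-(3/2):ℝ) := by
    have h2 : (x^2)⁻¹ = x ^ (-(2:ℝ)) := by
      rw [← Real.rpow_natCast x 2, ← Real.rpow_neg hxpos.le]
      norm_num
    rw [h2, ← Real.rpow_add hxpos, ← Real.rpow_one_add' hxpos.le (by norm_num)]
    norm_num
  have expand : x * c m * a m + (-x) * c (-m) * a (-m)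
      = x * (c m * (a m - C * (x^2)⁻¹) - c (-m) * (a (-m) - C * (x^2)⁻¹)
          + (c m - c (-m)) * (C * (x^2)⁻¹)) := by ring
  rw [expand, abs_mul, habs]
  have hb1 : |c m * (a m - C * (x^2)⁻¹)| ≤ Q * (K * x ^ (-(5/2):ℝ)) := by
    rw [abs_mul]
    exact mul_le_mul (by rw [abs_of_pos hc1.1]; exact hc1.2) ha1 (abs_nonneg _) hQ.le
  have hb2 : |c (-m) * (a (-m) - C * (x^2)⁻¹)| ≤ Q * (K * x ^ (-(5/2):ℝ)) := by
    rw [abs_mul]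
    exact mul_le_mul (by rw [abs_of_pos hc2.1]; exact hc2.2) ha2 (abs_nonneg _) hQ.le
  have hb3 : |(c m - c (-m)) * (C * (x^2)⁻¹)| ≤ Q * x ^ (-(1/2):ℝ) * (C * (x^2)⁻¹) := by
    rw [abs_mul]
    exact mul_le_mul hsym (le_of_eq (abs_of_pos (by positivity))) (abs_nonneg _)
      (by positivity)
  have tri : |c m * (a m - C * (x^2)⁻¹) - c (-m) * (a (-m) - C * (x^2)⁻¹)
      + (c m - c (-m)) * (C * (x^2)⁻¹)|
      ≤ Q * (K * x ^ (-(5/2):ℝ)) + Q * (K * x ^ (-(5/2):ℝ))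
        + Q * x ^ (-(1/2):ℝ) * (C * (x^2)⁻¹) := by
    calc _ ≤ |c m * (a m - C * (x^2)⁻¹) - c (-m) * (a (-m) - C * (x^2)⁻¹)|
            + |(c m - c (-m)) * (C * (x^2)⁻¹)| := abs_add_le _ _
    _ ≤ _ := by
        gcongr
        exact le_trans (abs_sub _ _) (add_le_add hb1 hb2)
  calc x * |_| ≤ x * (Q * (K * x ^ (-(5/2):ℝ)) + Q * (K * x ^ (-(5/2):ℝ))
        + Q * x ^ (-(1/2):ℝ) * (C * (x^2)⁻¹)) := mul_le_mul_of_nonneg_left tri hxpos.le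
  _ = (2*Q*K) * (x * x ^ (-(5/2):ℝ)) + (Q*C) * (x * ((x^2)⁻¹ * x ^ (-(1/2):ℝ))) := by ring
  _ = (2*Q*K + Q*C) * x ^ (-(3/2):ℝ) := by rw [e1, e2]; ring

/-- Abel-summation boundedness: if `a_n = C n⁻² + O(|n|^{-5/2})` are positive and
`c_n` are uniformly bounded positive numbers with `|c_{n+1}-c_n| ≤ Q|n|^{-3/2}` and
`|c_n - c_{-n}| ≤ Q|n|^{-1/2}`, then the partial sums `∑_{0<|n|≤N} n c_n a_n`
are uniformly bounded. -/
theorem abel_bounded (a c : ℤ → ℝ) (C K Q : ℝ) (hC : 0 < C) (hQ : 0 < Q)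
    (ha_pos : ∀ n : ℤ, n ≠ 0 → 0 < a n)
    (ha : ∀ n : ℤ, n ≠ 0 → |a n - C * ((n : ℝ) ^ 2)⁻¹| ≤ K * |(n : ℝ)| ^ (-(5/2) : ℝ))
    (hc_bdd : ∀ n : ℤ, n ≠ 0 → 0 < c n ∧ c n ≤ Q)
    (hc_lip : ∀ n : ℤ, 1 < |n| → |c (n + 1) - c n| ≤ Q * |(n : ℝ)| ^ (-(3/2) : ℝ))
    (hc_sym : ∀ n : ℤ, 1 < n → |c n - c (-n)| ≤ Q * (n : ℝ) ^ (-(1/2) : ℝ)) :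
    ∃ B : ℝ, ∀ N : ℕ,
      |∑ n ∈ (Finset.Icc (-(N : ℤ)) (N : ℤ)).erase 0, (n : ℝ) * c n * a n| ≤ B := by
  have hK : 0 ≤ K := by
    have h := ha 1 one_ne_zero
    have h1 : ((1:ℤ):ℝ) = 1 := by norm_cast
    rw [h1] at h
    simp at h
    exact le_trans (abs_nonneg _) h
  have hgsum : Summable (fun k : ℕ => (k:ℝ)^(-(3/2):ℝ)) :=
    Real.summable_nat_rpow.mpr (by norm_num)
  set M := ∑' k : ℕ, (k:ℝ)^(-(3/2):ℝ) with hM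
  set D1 := Q * a 1 + Q * a (-1) with hD1
  set D2 := 2*Q*K + Q*C with hD2
  have hD1pos : 0 ≤ D1 := by
    have := ha_pos 1 one_ne_zero
    have := ha_pos (-1) (by norm_num)
    positivity
  have hD2pos : 0 ≤ D2 := by positivity
  have key := abel_key_aux a c C K Q hC hQ ha hc_bdd hc_sym
  have main : ∀ N : ℕ, |∑ n ∈ (Finset.Icc (-(N : ℤ)) (N : ℤ)).erase 0, (n : ℝ) * c n * a n|
      ≤ D1 + D2 * ∑ k ∈ Finset.Icc 2 N, ((k:ℕ):ℝ)^(-(3/2):ℝ) := by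
    intro N
    induction N with
    | zero => simp [hD1pos]
    | succ N ih =>
      have hcast : ((N+1 : ℕ) : ℤ) = (N:ℤ)+1 := by push_cast; ring
      have hset : (Finset.Icc (-((N+1:ℕ):ℤ)) ((N+1:ℕ):ℤ)).erase 0
          = insert ((N:ℤ)+1) (insert (-((N:ℤ)+1))
              ((Finset.Icc (-(N : ℤ)) (N : ℤ)).erase 0)) := by
        rw [hcast]
        ext x
        simp only [Finset.mem_erase, Finset.mem_Icc, Finset.mem_insert]
        omega
      rw [hset, Finset.sum_insert, Finset.sum_insert, ← add_assoc]
      rotate_left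
      · simp only [Finset.mem_erase, Finset.mem_Icc]; omega
      · simp only [Finset.mem_insert, Finset.mem_erase, Finset.mem_Icc]; omega
      set S := ∑ n ∈ (Finset.Icc (-(N : ℤ)) (N : ℤ)).erase 0, (n : ℝ) * c n * a n with hS
      rcases Nat.eq_zero_or_pos N with h0 | hpos
      · subst h0
        have hS0 : S = 0 := by simp [hS]
        have hIcc : (Finset.Icc 2 (0+1) : Finset ℕ) = ∅ := by decide
        rw [hS0, add_zero, hIcc, Finset.sum_empty, mul_zero, add_zero]
        have hc1 := hc_bdd 1 one_ne_zero
        have hc2 := hc_bdd (-1) (by norm_num)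
        have ha1 := ha_pos 1 one_ne_zero
        have ha2 := ha_pos (-1) (by norm_num)
        have hQa1 := mul_le_mul_of_nonneg_right hc1.2 ha1.le
        have hQa2 := mul_le_mul_of_nonneg_right hc2.2 ha2.le
        rw [hD1]
        norm_num
        calc |c 1 * a 1 - c (-1) * a (-1)| ≤ |c 1 * a 1| + |c (-1) * a (-1)| := abs_sub _ _
        _ ≤ Q * a 1 + Q * a (-1) := by
            rw [abs_of_pos (mul_pos hc1.1 ha1), abs_of_pos (mul_pos hc2.1 ha2)]
            linarith
      · have hterm := key ((N:ℤ)+1) (by omega)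
        have hsum : ∑ k ∈ Finset.Icc 2 (N+1), ((k:ℕ):ℝ)^(-(3/2):ℝ)
            = ∑ k ∈ Finset.Icc 2 N, ((k:ℕ):ℝ)^(-(3/2):ℝ) + ((N+1:ℕ):ℝ)^(-(3/2):ℝ) := by
          rw [Finset.sum_Icc_succ_top (by omega)]
        have hcast2 : (((N:ℤ)+1 : ℤ) : ℝ) = ((N+1:ℕ):ℝ) := by push_cast; ring
        rw [hsum]
        calc _ ≤ |(((N:ℤ)+1 : ℤ) : ℝ) * c ((N:ℤ)+1) * a ((N:ℤ)+1)
              + ((-((N:ℤ)+1) : ℤ) : ℝ) * c (-((N:ℤ)+1)) * a (-((N:ℤ)+1))| + |S| := abs_add_le _ _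
        _ ≤ (2*Q*K + Q*C) * (((N:ℤ)+1 : ℤ) : ℝ) ^ (-(3/2):ℝ)
              + (D1 + D2 * ∑ k ∈ Finset.Icc 2 N, ((k:ℕ):ℝ)^(-(3/2):ℝ)) := add_le_add hterm ih
        _ = D1 + D2 * (∑ k ∈ Finset.Icc 2 N, ((k:ℕ):ℝ)^(-(3/2):ℝ) + ((N+1:ℕ):ℝ)^(-(3/2):ℝ)) := by
            rw [hcast2, ← hD2]; ring
  refine ⟨D1 + D2 * M, fun N => ?_⟩
  calc _ ≤ D1 + D2 * ∑ k ∈ Finset.Icc 2 N, ((k:ℕ):ℝ)^(-(3/2):ℝ) := main N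
  _ ≤ D1 + D2 * M := by
      gcongr
      exact Summable.sum_le_tsum _ (fun i _ => by positivity) hgsum
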